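/- Let A and C be Green biset functors over k and F: P_A → P_C a k-linear functor between their associated categories. Then F is induced by a morphism of Green biset functors f: A → C (i.e. F = P_f) if and only if F is the identity on objects and F(A(x)(α)) = C(x)(F(α)) for every biset element x ∈ B_k(L×K, H×G) and every α ∈ A(H×G). -/

import Mathlib

set_option autoImplicit false
set_option maxHeartbeats 400000

/-! # Bisets

An `(H,G)`-biset is modelled as a finite `(H × G)`-set, via the usual dictionary
`(h,g) • x = h · x · g⁻¹`. -/

structure Biset (H G : Type) [Group H] [Group G] : Type 1 where
  carrier : Type
  fin : Finite carrier
  smul : H × G → carrier → carrier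
  one_smul' : ∀ x, smul 1 x = x
  mul_smul' : ∀ a b x, smul (a * b) x = smul a (smul b x)

namespace Biset

variable {G H K L : Type} [Group G] [Group H] [Group K] [Group L]

/-- An isomorphism of bisets: an equivariant bijection. -/
structure Iso (X Y : Biset H G) where
  toEquiv : X.carrier ≃ Y.carrier
  equivariant : ∀ a x, toEquiv (X.smul a x) = Y.smul a (toEquiv x)

/-- The relation defining the composition `Y ∘ X = Y ×_H X`. -/
def compRel (Y : Biset K H) (X : Biset H G) :
    Y.carrier × X.carrier → Y.carrier × X.carrier → Prop := fun p q =>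
  ∃ h : H, q.1 = Y.smul (1, h) p.1 ∧ q.2 = X.smul (h, 1) p.2

/-- Composition of bisets, `Y ∘ X = (Y × X)/H`. -/
def comp (Y : Biset K H) (X : Biset H G) : Biset K G where
  carrier := Quot (compRel Y X)
  fin := by
    have := Y.fin; have := X.fin
    exact Finite.of_surjective (Quot.mk _) fun q => Quot.inductionOn q fun a => ⟨a, rfl⟩
  smul a := Quot.map (fun p => (Y.smul (a.1, 1) p.1, X.smul (1, a.2) p.2)) (by
    rintro ⟨y, x⟩ ⟨y', x'⟩ ⟨h, h1, h2⟩
    dsimp only at h1 h2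
    refine ⟨h, ?_, ?_⟩
    · dsimp only
      rw [h1, ← Y.mul_smul', ← Y.mul_smul',
        show ((a.1, (1 : H)) : K × H) * (1, h) = ((1 : K), h) * (a.1, 1) by ext <;> simp]
    · dsimp only
      rw [h2, ← X.mul_smul', ← X.mul_smul',
        show (((1 : H), a.2) : H × G) * (h, 1) = (h, (1 : G)) * (1, a.2) by ext <;> simp])
  one_smul' x := Quot.inductionOn x fun p => by
    show Quot.mk _ (Y.smul (1, 1) p.1, X.smul (1, 1) p.2) = Quot.mk _ p
    rw [show ((1, 1) : K × H) = 1 from rfl, show ((1, 1) : H × G) = 1 from rfl,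
      Y.one_smul', X.one_smul']
  mul_smul' a b x := Quot.inductionOn x fun p => by
    show Quot.mk _ (Y.smul ((a * b).1, 1) p.1, X.smul (1, (a * b).2) p.2) = _
    have h1 : (((a * b).1, (1 : H)) : K × H) = (a.1, 1) * (b.1, 1) := by ext <;> simp
    have h2 : (((1 : H), (a * b).2) : H × G) = (1, a.2) * (1, b.2) := by ext <;> simp
    rw [h1, h2, Y.mul_smul', X.mul_smul']
    rfl

/-- The biset built from two homomorphisms into a group `M`, with two-sided
multiplication action. -/
def ofHoms {M : Type} [Group M] [Finite M] (f : H →* M) (g : G →* M) : Biset H G where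
  carrier := M
  fin := inferInstance
  smul a x := f a.1 * x * (g a.2)⁻¹
  one_smul' x := by simp
  mul_smul' a b x := by simp [mul_assoc]

/-- The induction biset `Ind(φ)` along `φ : G →* H`. -/
def ind {G H : Type} [Group G] [Group H] [Finite H] (φ : G →* H) : Biset H G :=
  ofHoms (MonoidHom.id H) φ

/-- The restriction biset `Res(φ)` along `φ : G →* H`. -/
def res {G H : Type} [Group G] [Group H] [Finite H] (φ : G →* H) : Biset G H :=
  ofHoms φ (MonoidHom.id H)

/-- `Iso(φ)` for a group isomorphism `φ`. -/
def isoB {G H : Type} [Group G] [Group H] [Finite H] (e : G ≃* H) : Biset H G :=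
  ind e.toMonoidHom

/-- The identity `(G,G)`-biset (the regular biset). -/
def idB (G : Type) [Group G] [Finite G] : Biset G G := ind (MonoidHom.id G)

/-- `→G` : the group `G` as a `(G × G, 1)`-biset. -/
def arrow (G : Type) [Group G] [Finite G] : Biset (G × G) PUnit where
  carrier := G
  fin := inferInstance
  smul a x := a.1.1 * x * a.1.2⁻¹
  one_smul' x := by simp
  mul_smul' a b x := by simp [mul_assoc]

/-- An `(H,G)`-biset regarded as an `(H × G, 1)`-biset. -/
def oneSided (X : Biset H G) : Biset (H × G) PUnit where
  carrier := X.carrier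
  fin := X.fin
  smul a x := X.smul a.1 x
  one_smul' := X.one_smul'
  mul_smul' a b x := X.mul_smul' a.1 b.1 x

/-- The opposite biset `X^op` of an `(H,G)`-biset: `g·x·h = h⁻¹ x g⁻¹`. -/
def op (X : Biset H G) : Biset G H where
  carrier := X.carrier
  fin := X.fin
  smul a x := X.smul (a.2, a.1) x
  one_smul' := X.one_smul'
  mul_smul' a b x := X.mul_smul' (a.2, a.1) (b.2, b.1) x

/-- The biset `K × ←H × G` implementing composition in associated categories,
as a `(K × G, (K × H) × (H × G))`-biset. -/
def middle (K H G : Type) [Group K] [Group H] [Group G] [Finite K] [Finite H] [Finite G] :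
    Biset (K × G) ((K × H) × (H × G)) where
  carrier := K × H × G
  fin := inferInstance
  smul a x :=
    (a.1.1 * x.1 * a.2.1.1⁻¹, a.2.1.2 * x.2.1 * a.2.2.1⁻¹, a.2.2.2 * x.2.2 * a.1.2⁻¹)
  one_smul' x := by obtain ⟨x1, x2, x3⟩ := x; simp
  mul_smul' a b x := by
    obtain ⟨⟨k, g⟩, ⟨k', h₁⟩, ⟨h₂, g'⟩⟩ := a
    obtain ⟨⟨k2, g2⟩, ⟨k2', h₁2⟩, ⟨h₂2, g'2⟩⟩ := b
    obtain ⟨x1, x2, x3⟩ := x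
    simp [mul_assoc]

/-- The biset `H × ←G` implementing the action of `Hom_{P_A}(G,H)` on `A(G)`,
as an `(H, (H × G) × G)`-biset. -/
def half (H G : Type) [Group H] [Group G] [Finite H] [Finite G] :
    Biset H ((H × G) × G) where
  carrier := H × G
  fin := inferInstance
  smul a x := (a.1 * x.1 * a.2.1.1⁻¹, a.2.1.2 * x.2 * a.2.2⁻¹)
  one_smul' x := by obtain ⟨x1, x2⟩ := x; simp
  mul_smul' a b x := by
    obtain ⟨h, ⟨h', g₁⟩, g₂⟩ := a
    obtain ⟨h2, ⟨h'2, g₁2⟩, g₂2⟩ := b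
    obtain ⟨x1, x2⟩ := x
    simp [mul_assoc]

/-- The biset `H × ←G × ←G × H`, as an
`(H × H, (H × G) × ((G × G) × (G × H)))`-biset. -/
def middle4 (H G : Type) [Group H] [Group G] [Finite H] [Finite G] :
    Biset (H × H) ((H × G) × ((G × G) × (G × H))) where
  carrier := H × G × G × H
  fin := inferInstance
  smul a x :=
    (a.1.1 * x.1 * a.2.1.1⁻¹, a.2.1.2 * x.2.1 * a.2.2.1.1⁻¹,
      a.2.2.1.2 * x.2.2.1 * a.2.2.2.1⁻¹, a.2.2.2.2 * x.2.2.2 * a.1.2⁻¹)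
  one_smul' x := by obtain ⟨x1, x2, x3, x4⟩ := x; simp
  mul_smul' a b x := by
    obtain ⟨⟨p, q⟩, ⟨h₁, g₁⟩, ⟨g₂, g₃⟩, ⟨g₄, h₂⟩⟩ := a
    obtain ⟨⟨pb, qb⟩, ⟨h₁b, g₁b⟩, ⟨g₂b, g₃b⟩, ⟨g₄b, h₂b⟩⟩ := b
    obtain ⟨x1, x2, x3, x4⟩ := x
    simp [mul_assoc]

/-- External product of bisets. -/
def bprod (X : Biset H G) (Y : Biset L K) : Biset (H × L) (G × K) where
  carrier := X.carrier × Y.carrier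
  fin := by have := X.fin; have := Y.fin; exact inferInstance
  smul a p := (X.smul (a.1.1, a.2.1) p.1, Y.smul (a.1.2, a.2.2) p.2)
  one_smul' p := by
    show (X.smul 1 p.1, Y.smul 1 p.2) = p
    rw [X.one_smul', Y.one_smul']
  mul_smul' a b p := by
    show (X.smul ((a.1.1, a.2.1) * (b.1.1, b.2.1)) p.1,
          Y.smul ((a.1.2, a.2.2) * (b.1.2, b.2.2)) p.2) = _
    rw [X.mul_smul', Y.mul_smul']

/-- Disjoint union of bisets. -/
def bsum (X Y : Biset H G) : Biset H G where
  carrier := X.carrier ⊕ Y.carrier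
  fin := by have := X.fin; have := Y.fin; exact inferInstance
  smul a p := Sum.map (X.smul a) (Y.smul a) p
  one_smul' p := by cases p <;> simp [Sum.map, X.one_smul', Y.one_smul']
  mul_smul' a b p := by cases p <;> simp [Sum.map, X.mul_smul', Y.mul_smul']

end Biset

/-- The diagonal homomorphism `G →* G × G`. -/
def diagHom (G : Type) [Group G] : G →* G × G := (MonoidHom.id G).prod (MonoidHom.id G)

/-! # Green biset functors -/

/-- A Green biset functor over `k` (with domain all finite groups): a biset functor
with compatible `k`-algebra structures on evaluations, such that restrictions are
algebra homomorphisms and the Frobenius identities hold. -/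
structure GreenBF (k : Type) [CommRing k] : Type 2 where
  obj : (G : Type) → [Group G] → [Fintype G] → Type
  ring : (G : Type) → [Group G] → [Fintype G] → Ring (obj G)
  alg : (G : Type) → [Group G] → [Fintype G] → haveI := ring G; Algebra k (obj G)
  map : {G H : Type} → [Group G] → [Fintype G] → [Group H] → [Fintype H] →
    Biset H G → obj G → obj H
  map_add : ∀ {G H : Type} [Group G] [Fintype G] [Group H] [Fintype H]
    (X : Biset H G) (a b : obj G),
    haveI := ring G; haveI := ring H
    map X (a + b) = map X a + map X b
  map_smul : ∀ {G H : Type} [Group G] [Fintype G] [Group H] [Fintype H]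
    (X : Biset H G) (c : k) (a : obj G),
    haveI := ring G; haveI := ring H; haveI := alg G; haveI := alg H
    map X (c • a) = c • map X a
  map_iso : ∀ {G H : Type} [Group G] [Fintype G] [Group H] [Fintype H]
    (X Y : Biset H G), Biset.Iso X Y → ∀ a, map X a = map Y a
  map_id : ∀ {G : Type} [Group G] [Fintype G] (a : obj G), map (Biset.idB G) a = a
  map_comp : ∀ {G H K : Type} [Group G] [Fintype G] [Group H] [Fintype H]
    [Group K] [Fintype K] (Y : Biset K H) (X : Biset H G) (a : obj G),
    map (Y.comp X) a = map Y (map X a)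
  map_bsum : ∀ {G H : Type} [Group G] [Fintype G] [Group H] [Fintype H]
    (X Y : Biset H G) (a : obj G),
    haveI := ring H
    map (X.bsum Y) a = map X a + map Y a
  res_mul : ∀ {G H : Type} [Group G] [Fintype G] [Group H] [Fintype H]
    (φ : G →* H) (a b : obj H),
    haveI := ring G; haveI := ring H
    map (Biset.res φ) (a * b) = map (Biset.res φ) a * map (Biset.res φ) b
  res_one : ∀ {G H : Type} [Group G] [Fintype G] [Group H] [Fintype H] (φ : G →* H),
    haveI := ring G; haveI := ring H
    map (Biset.res φ) (1 : obj H) = 1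
  frob1 : ∀ {G H : Type} [Group G] [Fintype G] [Group H] [Fintype H]
    (φ : G →* H) (a : obj H) (b : obj G),
    haveI := ring G; haveI := ring H
    a * map (Biset.ind φ) b = map (Biset.ind φ) (map (Biset.res φ) a * b)
  frob2 : ∀ {G H : Type} [Group G] [Fintype G] [Group H] [Fintype H]
    (φ : G →* H) (a : obj H) (b : obj G),
    haveI := ring G; haveI := ring H
    map (Biset.ind φ) b * a = map (Biset.ind φ) (b * map (Biset.res φ) a)

namespace GreenBF

variable {k : Type} [CommRing k]

/-- The identity element `ε_A ∈ A(1)`. -/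
def one1 (A : GreenBF k) : A.obj PUnit := haveI := A.ring PUnit; 1

/-- The external (bilinear) product `a × b ∈ A(G × H)`. -/
def xprod (A : GreenBF k) {G H : Type} [Group G] [Fintype G] [Group H] [Fintype H]
    (a : A.obj G) (b : A.obj H) : A.obj (G × H) :=
  haveI := A.ring (G × H)
  A.map (Biset.res (MonoidHom.fst G H)) a * A.map (Biset.res (MonoidHom.snd G H)) b

/-- Composition in the associated category `P_A` :
`Hom(G,H) = A(H × G)`, `α ∘ β = A(K×←H×G)(α × β)`. -/
def pcomp (A : GreenBF k) {G H K : Type} [Group G] [Fintype G] [Group H] [Fintype H]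
    [Group K] [Fintype K] (α : A.obj (K × H)) (β : A.obj (H × G)) : A.obj (K × G) :=
  A.map (Biset.middle K H G) (A.xprod α β)

/-- The identity morphism of `G` in `P_A` : `Id_G = A(→G)(ε_A)`. -/
def catId (A : GreenBF k) (G : Type) [Group G] [Fintype G] : A.obj (G × G) :=
  A.map (Biset.arrow G) A.one1

/-- The tilde map `ã = A(Ind Δ)(a) ∈ End_{P_A}(G)`. -/
def tilde (A : GreenBF k) {G : Type} [Group G] [Fintype G] (a : A.obj G) : A.obj (G × G) :=
  A.map (Biset.ind (diagHom G)) a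

/-- The image `e_{H×G}(→x) ∈ A(H × G)` of a biset under the initial morphism from
the Burnside functor. -/
def bsElt (A : GreenBF k) {G H : Type} [Group G] [Fintype G] [Group H] [Fintype H]
    (x : Biset H G) : A.obj (H × G) :=
  A.map x.oneSided A.one1

/-- The functor of double algebras: `E_A(x)(α) = e(→x) ∘ α ∘ e(→x^op)`. -/
def EA (A : GreenBF k) {G H : Type} [Group G] [Fintype G] [Group H] [Fintype H]
    (x : Biset H G) (α : A.obj (G × G)) : A.obj (H × H) :=
  A.pcomp (A.bsElt x) (A.pcomp α (A.bsElt x.op))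

/-- The action of `Hom_{P_A}(G,H) = A(H × G)` on `A(G)` : `A(α)(b)`. -/
def actOn (A : GreenBF k) {G H : Type} [Group G] [Fintype G] [Group H] [Fintype H]
    (α : A.obj (H × G)) (b : A.obj G) : A.obj H :=
  A.map (Biset.half H G) (A.xprod α b)

/-- The generalized inflation of endomorphisms
`ω ↦ Id_G + E_A(Inf)(ω − Id_Q)` along `π : G →* Q`. -/
def dAInf (A : GreenBF k) {G Q : Type} [Group G] [Fintype G] [Group Q] [Fintype Q]
    (π : G →* Q) (ω : A.obj (Q × Q)) : A.obj (G × G) :=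
  haveI := A.ring (G × G); haveI := A.ring (Q × Q)
  A.catId G + A.EA (Biset.res π) (ω - A.catId Q)

/-- An endomorphism `α ∈ End_{P_A}(G)`... more generally a morphism in `P_A` which is
an isomorphism. -/
def IsIsoP (A : GreenBF k) {G H : Type} [Group G] [Fintype G] [Group H] [Fintype H]
    (ω : A.obj (H × G)) : Prop :=
  ∃ ω' : A.obj (G × H), A.pcomp ω ω' = A.catId H ∧ A.pcomp ω' ω = A.catId G

/-- The opposite Green biset functor `A^op`. -/
def opp (A : GreenBF k) : GreenBF k where
  obj G := (A.obj G)ᵐᵒᵖ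
  ring G := letI := A.ring G; inferInstance
  alg G := letI := A.ring G; letI := A.alg G; inferInstance
  map X a := MulOpposite.op (A.map X a.unop)
  map_add := by
    intro G H _ _ _ _ X a b
    letI := A.ring G; letI := A.ring H
    apply MulOpposite.unop_injective
    exact A.map_add X a.unop b.unop
  map_smul := by
    intro G H _ _ _ _ X c a
    letI := A.ring G; letI := A.ring H; letI := A.alg G; letI := A.alg H
    apply MulOpposite.unop_injective
    exact A.map_smul X c a.unop
  map_iso := by
    intro G H _ _ _ _ X Y e a
    exact congrArg MulOpposite.op (A.map_iso X Y e a.unop)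
  map_id := by
    intro G _ _ a
    apply MulOpposite.unop_injective
    exact A.map_id a.unop
  map_comp := by
    intro G H K _ _ _ _ _ _ Y X a
    exact congrArg MulOpposite.op (A.map_comp Y X a.unop)
  map_bsum := by
    intro G H _ _ _ _ X Y a
    letI := A.ring H
    apply MulOpposite.unop_injective
    exact A.map_bsum X Y a.unop
  res_mul := by
    intro G H _ _ _ _ φ a b
    letI := A.ring G; letI := A.ring H
    apply MulOpposite.unop_injective
    exact A.res_mul φ b.unop a.unop
  res_one := by
    intro G H _ _ _ _ φ
    letI := A.ring G; letI := A.ring H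
    apply MulOpposite.unop_injective
    exact A.res_one φ
  frob1 := by
    intro G H _ _ _ _ φ a b
    letI := A.ring G; letI := A.ring H
    apply MulOpposite.unop_injective
    exact A.frob2 φ a.unop b.unop
  frob2 := by
    intro G H _ _ _ _ φ a b
    letI := A.ring G; letI := A.ring H
    apply MulOpposite.unop_injective
    exact A.frob1 φ a.unop b.unop

end GreenBF

/-- A morphism of Green biset functors. -/
structure GreenHom {k : Type} [CommRing k] (A C : GreenBF k) : Type 1 where
  app : ∀ (G : Type) [Group G] [Fintype G], A.obj G → C.obj G
  natural : ∀ {G H : Type} [Group G] [Fintype G] [Group H] [Fintype H]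
    (X : Biset H G) (a : A.obj G), app H (A.map X a) = C.map X (app G a)
  app_add : ∀ (G : Type) [Group G] [Fintype G] (a b : A.obj G),
    haveI := A.ring G; haveI := C.ring G
    app G (a + b) = app G a + app G b
  app_smul : ∀ (G : Type) [Group G] [Fintype G] (c : k) (a : A.obj G),
    haveI := A.ring G; haveI := C.ring G; haveI := A.alg G; haveI := C.alg G
    app G (c • a) = c • app G a
  app_mul : ∀ (G : Type) [Group G] [Fintype G] (a b : A.obj G),
    haveI := A.ring G; haveI := C.ring G
    app G (a * b) = app G a * app G b
  app_one : ∀ (G : Type) [Group G] [Fintype G],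
    haveI := A.ring G; haveI := C.ring G
    app G (1 : A.obj G) = 1

/-- An anti-involution on a Green biset functor: a biset functor endomorphism with
`a★★ = a` and `(ab)★ = b★ a★`. -/
structure AntiInvol {k : Type} [CommRing k] (A : GreenBF k) : Type 1 where
  app : ∀ (G : Type) [Group G] [Fintype G], A.obj G → A.obj G
  natural : ∀ {G H : Type} [Group G] [Fintype G] [Group H] [Fintype H]
    (X : Biset H G) (a : A.obj G), app H (A.map X a) = A.map X (app G a)
  app_add : ∀ (G : Type) [Group G] [Fintype G] (a b : A.obj G),
    haveI := A.ring G
    app G (a + b) = app G a + app G b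
  app_smul : ∀ (G : Type) [Group G] [Fintype G] (c : k) (a : A.obj G),
    haveI := A.ring G; haveI := A.alg G
    app G (c • a) = c • app G a
  invol : ∀ (G : Type) [Group G] [Fintype G] (a : A.obj G), app G (app G a) = a
  anti : ∀ (G : Type) [Group G] [Fintype G] (a b : A.obj G),
    haveI := A.ring G
    app G (a * b) = app G b * app G a

namespace GreenBF

variable {k : Type} [CommRing k]

/-- The duality `_^• = T ∘ P_δ` on the associated category induced by an
anti-involution: `α^• = A(Iso τ)(α★)`. -/
def bull (A : GreenBF k) (s : AntiInvol A) {G H : Type} [Group G] [Fintype G]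
    [Group H] [Fintype H] (α : A.obj (H × G)) : A.obj (G × H) :=
  A.map (Biset.isoB (MulEquiv.prodComm : H × G ≃* G × H)) (s.app (H × G) α)

/-- An orthogonal isomorphism in `P_A` : `ω^• = ω⁻¹`. -/
def IsOrthIso (A : GreenBF k) (s : AntiInvol A) {G H : Type} [Group G] [Fintype G]
    [Group H] [Fintype H] (ω : A.obj (H × G)) : Prop :=
  A.pcomp ω (A.bull s ω) = A.catId H ∧ A.pcomp (A.bull s ω) ω = A.catId G

end GreenBF

/-- Bundled finite groups: the objects of the associated categories. -/
structure Gp : Type 1 where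
  α : Type
  grp : Group α
  fin : Fintype α

attribute [instance] Gp.grp Gp.fin

/-- A `k`-linear functor `P_A → P_C` between associated categories
(`Hom_{P_A}(G,H) = A(H × G)`). -/
structure LinFunctor (k : Type) [CommRing k] (A C : GreenBF k) : Type 1 where
  onObj : Gp → Gp
  onHom : ∀ (G H : Gp), A.obj (H.α × G.α) → C.obj ((onObj H).α × (onObj G).α)
  onHom_id : ∀ G : Gp, onHom G G (A.catId G.α) = C.catId (onObj G).α
  onHom_comp : ∀ (G H K : Gp) (α : A.obj (K.α × H.α)) (β : A.obj (H.α × G.α)),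
    onHom G K (A.pcomp α β) = C.pcomp (onHom H K α) (onHom G H β)
  onHom_add : ∀ (G H : Gp) (α β : A.obj (H.α × G.α)),
    haveI := A.ring (H.α × G.α); haveI := C.ring ((onObj H).α × (onObj G).α)
    onHom G H (α + β) = onHom G H α + onHom G H β
  onHom_smul : ∀ (G H : Gp) (c : k) (α : A.obj (H.α × G.α)),
    haveI := A.ring (H.α × G.α); haveI := A.alg (H.α × G.α)
    haveI := C.ring ((onObj H).α × (onObj G).α); haveI := C.alg ((onObj H).α × (onObj G).α)
    onHom G H (c • α) = c • onHom G H α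

/-- The linear functor `P_f : P_A → P_C` induced by a morphism of Green biset
functors `f : A → C`. -/
def inducedFunctor (k : Type) [CommRing k] (A C : GreenBF k) (f : GreenHom A C) :
    LinFunctor k A C where
  onObj := id
  onHom G H α := f.app (H.α × G.α) α
  onHom_id G := by
    show f.app _ (A.map (Biset.arrow G.α) A.one1) = C.map (Biset.arrow G.α) C.one1
    rw [f.natural]
    exact congrArg _ (f.app_one PUnit)
  onHom_comp G H K α β := by
    show f.app _ (A.map (Biset.middle K.α H.α G.α) (A.xprod α β)) =
      C.map (Biset.middle K.α H.α G.α) (C.xprod (f.app _ α) (f.app _ β))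
    rw [f.natural]
    refine congrArg _ ?_
    letI := A.ring ((K.α × H.α) × (H.α × G.α))
    letI := C.ring ((K.α × H.α) × (H.α × G.α))
    show f.app _ (A.map (Biset.res (MonoidHom.fst (K.α × H.α) (H.α × G.α))) α *
        A.map (Biset.res (MonoidHom.snd (K.α × H.α) (H.α × G.α))) β) = _
    rw [f.app_mul, f.natural, f.natural]
    rfl
  onHom_add G H α β := f.app_add (H.α × G.α) α β
  onHom_smul G H c α := f.app_smul (H.α × G.α) c α

/-! ## Auxiliary constructions for the proof -/

section Aux

open Biset

/-- Insertion of the trivial factor. -/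
def sigG (G : Type) [Group G] : G →* G × PUnit :=
  MonoidHom.mk' (fun g => (g, PUnit.unit)) (fun _ _ => rfl)

/-- Projection away from the trivial factor. -/
def piG (G : Type) [Group G] : G × PUnit →* G :=
  MonoidHom.mk' (fun p => p.1) (fun _ _ => rfl)

def PhiG (G : Type) [Group G] : (G × G) →* ((G × G) × (G × PUnit)) :=
  MonoidHom.mk' (fun p => ((p.1, p.1), (p.2, PUnit.unit))) (fun _ _ => rfl)

def rhoG (G : Type) [Group G] : ((G × G) × (G × PUnit)) →* G :=
  MonoidHom.mk' (fun m => m.2.1) (fun _ _ => rfl)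

/-- A workhorse: build an isomorphism out of a composition of bisets. -/
def compIso {K H G : Type} [Group K] [Group H] [Group G]
    (Y : Biset K H) (X : Biset H G) (Z : Biset K G)
    (θ : Y.carrier × X.carrier → Z.carrier)
    (hrel : ∀ p q, compRel Y X p q → θ p = θ q)
    (s : Z.carrier → Y.carrier × X.carrier)
    (hs : ∀ z, θ (s z) = z)
    (hs' : ∀ p, Quot.mk (compRel Y X) (s (θ p)) = Quot.mk _ p)
    (heq : ∀ (a : K × G) (p : Y.carrier × X.carrier),
      θ (Y.smul (a.1, 1) p.1, X.smul (1, a.2) p.2) = Z.smul a (θ p)) :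
    Iso (Y.comp X) Z where
  toEquiv :=
    { toFun := Quot.lift θ hrel
      invFun := fun z => Quot.mk _ (s z)
      left_inv := fun q => Quot.inductionOn q fun p => hs' p
      right_inv := hs }
  equivariant := fun a q => Quot.inductionOn q fun p => heq a p

def isoIndInd {G H K : Type} [Group G] [Group H] [Finite H] [Group K] [Finite K]
    (φ : H →* K) (ψ : G →* H) :
    Iso ((Biset.ind φ).comp (Biset.ind ψ)) (Biset.ind (φ.comp ψ)) := by
  refine compIso _ _ _ (fun p : K × H => p.1 * φ p.2) ?_ (fun z : K => ((z, 1) : K × H)) ?_ ?_ ?_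
  · rintro ⟨m, n⟩ ⟨m', n'⟩ ⟨h, h1, h2⟩
    dsimp only at h1 h2 ⊢
    subst h1; subst h2
    change K at m; change H at n
    simp [Biset.ind, Biset.ofHoms, mul_assoc]
  · intro z
    change K at z
    simp [Biset.ind, Biset.ofHoms]
  · rintro ⟨m, n⟩
    change K at m; change H at n
    refine (Quot.sound ⟨(n : H)⁻¹, ?_, ?_⟩).symm
    · simp [Biset.ind, Biset.ofHoms]
    · simp [Biset.ind, Biset.ofHoms]
  · rintro ⟨kk, g⟩ ⟨m, n⟩
    change K at m; change H at n
    simp [Biset.ind, Biset.ofHoms, mul_assoc]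

def isoResRes {G H K : Type} [Group G] [Group H] [Finite H] [Group K] [Finite K]
    (ψ : G →* H) (φ : H →* K) :
    Iso ((Biset.res ψ).comp (Biset.res φ)) (Biset.res (φ.comp ψ)) := by
  refine compIso _ _ _ (fun p : H × K => φ p.1 * p.2) ?_ (fun z : K => ((1, z) : H × K)) ?_ ?_ ?_
  · rintro ⟨m, n⟩ ⟨m', n'⟩ ⟨h, h1, h2⟩
    dsimp only at h1 h2 ⊢
    subst h1; subst h2
    change H at m; change K at n
    simp [Biset.res, Biset.ofHoms, mul_assoc]
  · intro z
    change K at z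
    simp [Biset.res, Biset.ofHoms]
  · rintro ⟨m, n⟩
    change H at m; change K at n
    refine (Quot.sound ⟨(m : H), ?_, ?_⟩).symm
    · simp [Biset.res, Biset.ofHoms]
    · simp [Biset.res, Biset.ofHoms]
  · rintro ⟨g, kk⟩ ⟨m, n⟩
    change H at m; change K at n
    simp [Biset.res, Biset.ofHoms, mul_assoc]

def isoResInd {L M G : Type} [Group L] [Group M] [Finite M] [Group G]
    (φ : L →* M) (ψ : G →* M) :
    Iso ((Biset.res φ).comp (Biset.ind ψ)) (Biset.ofHoms φ ψ) := by
  refine compIso _ _ _ (fun p : M × M => p.1 * p.2) ?_ (fun z : M => ((z, 1) : M × M)) ?_ ?_ ?_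
  · rintro ⟨m, n⟩ ⟨m', n'⟩ ⟨h, h1, h2⟩
    dsimp only at h1 h2 ⊢
    subst h1; subst h2
    change M at m; change M at n
    simp [Biset.res, Biset.ind, Biset.ofHoms, mul_assoc]
  · intro z
    change M at z
    simp [Biset.res, Biset.ind, Biset.ofHoms]
  · rintro ⟨m, n⟩
    change M at m; change M at n
    refine (Quot.sound ⟨(n : M)⁻¹, ?_, ?_⟩).symm
    · simp [Biset.res, Biset.ind, Biset.ofHoms]
    · simp [Biset.res, Biset.ind, Biset.ofHoms]
  · rintro ⟨l, g⟩ ⟨m, n⟩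
    change M at m; change M at n
    simp [Biset.res, Biset.ind, Biset.ofHoms, mul_assoc]


/-- The biset `G × ←G` with its left `G`-action renamed through `G × PUnit`,
appearing when composing with the middle biset. -/
def Wbis (G : Type) [Group G] [Fintype G] : Biset (G × PUnit) (G × G) where
  carrier := G × G
  fin := inferInstance
  smul a z := (a.1.1 * z.1 * a.2.1⁻¹, a.2.1 * z.2 * a.2.2⁻¹)
  one_smul' z := by obtain ⟨z1, z2⟩ := z; simp
  mul_smul' a b z := by
    obtain ⟨⟨a1, a2⟩, ⟨a3, a4⟩⟩ := a
    obtain ⟨⟨b1, b2⟩, ⟨b3, b4⟩⟩ := b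
    obtain ⟨z1, z2⟩ := z
    simp [mul_assoc]

section SpecificIsos

variable (G : Type) [Group G] [Fintype G]

def isoIndResG :
    Iso ((Biset.ind (PhiG G)).comp (Biset.res (MonoidHom.fst G G)))
      (Biset.ofHoms (MonoidHom.fst (G × G) (G × PUnit)) (diagHom G)) := by
  refine compIso _ _ _
      (fun p : (((G × G) × (G × PUnit)) × G) => ((p.1.1.1 * p.2, p.1.1.2 * p.2) : G × G)) ?_
      (fun z : G × G => ((((z, ((1 : G), PUnit.unit)) : (G × G) × (G × PUnit)), (1 : G))))
      ?_ ?_ ?_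
  · rintro ⟨⟨⟨u, v⟩, ⟨w, t⟩⟩, x⟩ ⟨m', n'⟩ ⟨⟨h1, h2⟩, e1, e2⟩
    dsimp only at e1 e2 ⊢
    subst e1; subst e2
    change G at x
    simp [Biset.ind, Biset.res, Biset.ofHoms, PhiG, diagHom, mul_assoc]
  · rintro ⟨z1, z2⟩
    simp [Biset.ind, Biset.res, Biset.ofHoms]
  · rintro ⟨⟨⟨u, v⟩, ⟨w, t⟩⟩, x⟩
    change G at x
    refine (Quot.sound ⟨((x⁻¹, w) : G × G), ?_, ?_⟩).symm
    · simp [Biset.ind, Biset.res, Biset.ofHoms, PhiG, Prod.ext_iff, mul_assoc]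
    · simp [Biset.ind, Biset.res, Biset.ofHoms]
  · rintro ⟨⟨⟨r1, r2⟩, ⟨r3, r4⟩⟩, g⟩ ⟨⟨⟨u, v⟩, ⟨w, t⟩⟩, x⟩
    change G at x
    simp [Biset.ind, Biset.res, Biset.ofHoms, PhiG, diagHom, Prod.ext_iff, mul_assoc]

def isoMidW :
    Iso ((Biset.middle G G PUnit).comp (Biset.ind (PhiG G))) (Wbis G) := by
  refine compIso _ _ _
      (fun p : ((G × G × PUnit) × ((G × G) × (G × PUnit))) =>
        ((p.1.1 * p.2.1.1, p.2.1.2⁻¹ * p.1.2.1 * p.2.2.1) : G × G)) ?_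
      (fun z : G × G => (((z.1, z.2, PUnit.unit), (1 : (G × G) × (G × PUnit)))))
      ?_ ?_ ?_
  · rintro ⟨⟨x1, x2, x3⟩, ⟨⟨u, v⟩, ⟨w, t⟩⟩⟩ ⟨m', n'⟩ ⟨⟨⟨h1, h2⟩, ⟨h3, h4⟩⟩, e1, e2⟩
    dsimp only at e1 e2 ⊢
    subst e1; subst e2
    simp [Biset.middle, Biset.ind, Biset.ofHoms, mul_assoc]
    rfl
  · rintro ⟨z1, z2⟩
    simp [Biset.middle, Biset.ind, Biset.ofHoms]
    rfl
  · rintro ⟨⟨x1, x2, x3⟩, ⟨⟨u, v⟩, ⟨w, t⟩⟩⟩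
    refine (Quot.sound ⟨(((u⁻¹, v⁻¹), (w⁻¹, PUnit.unit)) : (G × G) × (G × PUnit)), ?_, ?_⟩).symm
    · simp [Biset.middle, Biset.ind, Biset.ofHoms, Prod.ext_iff, mul_assoc]
    · simp [Biset.ind, Biset.ofHoms, Prod.ext_iff]
  · rintro ⟨⟨a1, a2⟩, ⟨s1, s2⟩⟩ ⟨⟨x1, x2, x3⟩, ⟨⟨u, v⟩, ⟨w, t⟩⟩⟩
    simp [Biset.middle, Biset.ind, Biset.ofHoms, Wbis, PhiG, Prod.ext_iff, mul_assoc]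

def isoIndResW :
    Iso ((Biset.ind (sigG G)).comp (Biset.res (diagHom G))) (Wbis G) := by
  refine compIso _ _ _
      (fun p : ((G × PUnit) × (G × G)) => ((p.1.1 * p.2.1, p.2.1⁻¹ * p.2.2) : G × G)) ?_
      (fun z : G × G => ((((z.1, PUnit.unit) : G × PUnit), ((1 : G), z.2))))
      ?_ ?_ ?_
  · rintro ⟨⟨m1, m2⟩, ⟨n1, n2⟩⟩ ⟨m', n'⟩ ⟨h, e1, e2⟩
    dsimp only at e1 e2 ⊢
    subst e1; subst e2
    simp [Biset.ind, Biset.res, Biset.ofHoms, sigG, diagHom, mul_assoc]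
    rfl
  · rintro ⟨z1, z2⟩
    simp [Biset.ind, Biset.res, Biset.ofHoms]
    rfl
  · rintro ⟨⟨m1, m2⟩, ⟨n1, n2⟩⟩
    refine (Quot.sound ⟨(n1⁻¹ : G), ?_, ?_⟩).symm
    · simp [Biset.ind, Biset.res, Biset.ofHoms, sigG, Prod.ext_iff]
    · simp [Biset.ind, Biset.res, Biset.ofHoms, diagHom, Prod.ext_iff, mul_assoc]
  · rintro ⟨⟨a1, a2⟩, ⟨s1, s2⟩⟩ ⟨⟨m1, m2⟩, ⟨n1, n2⟩⟩
    simp [Biset.ind, Biset.res, Biset.ofHoms, Wbis, sigG, diagHom, Prod.ext_iff, mul_assoc]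

def isoStripG :
    Iso (Biset.ofHoms (MonoidHom.snd (G × G) (G × PUnit)) (sigG G)) (Biset.res (rhoG G)) where
  toEquiv :=
    { toFun := fun p : G × PUnit => p.1
      invFun := fun g : G => ((g, PUnit.unit) : G × PUnit)
      left_inv := fun p => rfl
      right_inv := fun g => rfl }
  equivariant := by
    rintro ⟨⟨⟨a1, a2⟩, ⟨a3, a4⟩⟩, g⟩ ⟨x1, x2⟩
    simp [Biset.ofHoms, Biset.res, sigG, rhoG, mul_assoc]
    rfl

def isoArrowPUnit : Iso (Biset.ind (sigG PUnit)) (Biset.arrow PUnit) where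
  toEquiv :=
    { toFun := fun _ => PUnit.unit
      invFun := fun _ => ((PUnit.unit, PUnit.unit) : PUnit × PUnit)
      left_inv := fun p => rfl
      right_inv := fun g => rfl }
  equivariant := fun a x => rfl

end SpecificIsos


section MapLemmas

variable {k : Type} [CommRing k]

theorem map_ind_ind (A : GreenBF k) {G H K : Type} [Group G] [Fintype G]
    [Group H] [Fintype H] [Group K] [Fintype K]
    (φ : H →* K) (ψ : G →* H) (a : A.obj G) :
    A.map (Biset.ind φ) (A.map (Biset.ind ψ) a) = A.map (Biset.ind (φ.comp ψ)) a := by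
  rw [← A.map_comp]
  exact A.map_iso _ _ (isoIndInd φ ψ) a

theorem map_res_res (A : GreenBF k) {G H K : Type} [Group G] [Fintype G]
    [Group H] [Fintype H] [Group K] [Fintype K]
    (ψ : G →* H) (φ : H →* K) (a : A.obj K) :
    A.map (Biset.res ψ) (A.map (Biset.res φ) a) = A.map (Biset.res (φ.comp ψ)) a := by
  rw [← A.map_comp]
  exact A.map_iso _ _ (isoResRes ψ φ) a

theorem map_res_id (A : GreenBF k) {G : Type} [Group G] [Fintype G] (a : A.obj G) :
    A.map (Biset.res (MonoidHom.id G)) a = a :=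
  A.map_id a

theorem map_ind_id (A : GreenBF k) {G : Type} [Group G] [Fintype G] (a : A.obj G) :
    A.map (Biset.ind (MonoidHom.id G)) a = a :=
  A.map_id a

theorem map_cancel (A : GreenBF k) {G H : Type} [Group G] [Fintype G]
    [Group H] [Fintype H] (φ : G →* H) (ψ : H →* G)
    (h : φ.comp ψ = MonoidHom.id H) (x : A.obj H) :
    A.map (Biset.ind φ) (A.map (Biset.ind ψ) x) = x := by
  rw [map_ind_ind A φ ψ x, h]
  exact A.map_id x

/-- The key identity: the `hat` of a product `a * b` is the categorical composition
of the tilde of `a` with the hat of `b`. -/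
theorem hat_mul (A : GreenBF k) (G : Type) [Group G] [Fintype G] (a b : A.obj G) :
    A.map (Biset.ind (sigG G)) (haveI := A.ring G; a * b) =
      A.pcomp (A.tilde a) (A.map (Biset.ind (sigG G)) b) := by
  letI := A.ring G
  letI := A.ring (G × G)
  letI := A.ring (G × PUnit)
  letI := A.ring ((G × G) × (G × PUnit))
  unfold GreenBF.pcomp GreenBF.tilde GreenBF.xprod
  -- Step 1: rewrite the first factor using the butterfly decomposition.
  have e1 : A.map (Biset.res (MonoidHom.fst (G × G) (G × PUnit)))
        (A.map (Biset.ind (diagHom G)) a)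
      = A.map (Biset.ind (PhiG G)) (A.map (Biset.res (MonoidHom.fst G G)) a) := by
    rw [← A.map_comp, ← A.map_comp]
    rw [A.map_iso _ _ (isoResInd (MonoidHom.fst (G × G) (G × PUnit)) (diagHom G)) a]
    exact (A.map_iso _ _ (isoIndResG G) a).symm
  -- Step 2: rewrite the second factor.
  have e2 : A.map (Biset.res (MonoidHom.snd (G × G) (G × PUnit)))
        (A.map (Biset.ind (sigG G)) b)
      = A.map (Biset.res (rhoG G)) b := by
    rw [← A.map_comp]
    rw [A.map_iso _ _ (isoResInd (MonoidHom.snd (G × G) (G × PUnit)) (sigG G)) b]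
    exact A.map_iso _ _ (isoStripG G) b
  rw [e1, e2]
  -- Step 3: Frobenius.
  rw [A.frob2 (PhiG G) (A.map (Biset.res (rhoG G)) b) (A.map (Biset.res (MonoidHom.fst G G)) a)]
  have e3 : A.map (Biset.res (PhiG G)) (A.map (Biset.res (rhoG G)) b)
      = A.map (Biset.res (MonoidHom.snd G G)) b := by
    rw [map_res_res A (PhiG G) (rhoG G) b]
    have : (rhoG G).comp (PhiG G) = MonoidHom.snd G G := MonoidHom.ext fun x => rfl
    rw [this]
  rw [e3]
  -- Step 4: compose with the middle biset.
  rw [← A.map_comp, A.map_iso _ _ (isoMidW G) _,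
    ← A.map_iso _ _ (isoIndResW G) _, A.map_comp]
  -- Step 5: restriction along the diagonal of an external product is the product.
  have e5 : A.map (Biset.res (diagHom G))
      (A.map (Biset.res (MonoidHom.fst G G)) a * A.map (Biset.res (MonoidHom.snd G G)) b)
      = a * b := by
    rw [A.res_mul, map_res_res A (diagHom G) (MonoidHom.fst G G) a,
      map_res_res A (diagHom G) (MonoidHom.snd G G) b]
    have h1 : (MonoidHom.fst G G).comp (diagHom G) = MonoidHom.id G :=
      MonoidHom.ext fun x => rfl
    have h2 : (MonoidHom.snd G G).comp (diagHom G) = MonoidHom.id G :=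
      MonoidHom.ext fun x => rfl
    rw [h1, h2, map_res_id A a, map_res_id A b]
  rw [e5]

theorem hat_one (A : GreenBF k) :
    A.map (Biset.ind (sigG PUnit)) A.one1 = A.catId PUnit :=
  A.map_iso _ _ isoArrowPUnit A.one1

end MapLemmas


/-! ### Constructing the morphism of Green functors from the functor data -/

abbrev GpMk (G : Type) [Group G] [Fintype G] : Gp := ⟨G, inferInstance, inferInstance⟩

abbrev GpP : Gp := GpMk PUnit

section Construct

variable {k : Type} [CommRing k] (A C : GreenBF k)
variable (T : ∀ G H : Gp, A.obj (H.α × G.α) → C.obj (H.α × G.α))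

/-- The candidate components of the morphism of Green biset functors. -/
def appOf (G : Type) [Group G] [Fintype G] (a : A.obj G) : C.obj G :=
  C.map (Biset.ind (piG G)) (T GpP (GpMk G) (A.map (Biset.ind (sigG G)) a))

theorem appOf_hat (G : Type) [Group G] [Fintype G] (a : A.obj G) :
    C.map (Biset.ind (sigG G)) (appOf A C T G a)
      = T GpP (GpMk G) (A.map (Biset.ind (sigG G)) a) :=
  map_cancel C (sigG G) (piG G) (MonoidHom.ext fun _ => rfl) _

theorem appOf_natural
    (hnat : ∀ (G H K L : Gp) (x : Biset (L.α × K.α) (H.α × G.α))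
      (α : A.obj (H.α × G.α)), T K L (A.map x α) = C.map x (T G H α))
    {G H : Type} [Group G] [Fintype G] [Group H] [Fintype H]
    (X : Biset H G) (a : A.obj G) :
    appOf A C T H (A.map X a) = C.map X (appOf A C T G a) := by
  unfold appOf
  have e : A.map (Biset.ind (sigG H)) (A.map X a)
      = A.map ((Biset.ind (sigG H)).comp (X.comp (Biset.ind (piG G))))
          (A.map (Biset.ind (sigG G)) a) := by
    rw [A.map_comp, A.map_comp, map_cancel A (piG G) (sigG G) (MonoidHom.ext fun _ => rfl)]
  rw [e,
    hnat GpP (GpMk G) GpP (GpMk H)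
      ((Biset.ind (sigG H)).comp (X.comp (Biset.ind (piG G)))) _,
    C.map_comp, C.map_comp,
    map_cancel C (piG H) (sigG H) (MonoidHom.ext fun _ => rfl)]

theorem appOf_add
    (hadd : ∀ (G H : Gp) (α β : A.obj (H.α × G.α)),
      haveI := A.ring (H.α × G.α); haveI := C.ring (H.α × G.α)
      T G H (α + β) = T G H α + T G H β)
    (G : Type) [Group G] [Fintype G] (a b : A.obj G) :
    haveI := A.ring G; haveI := C.ring G
    appOf A C T G (a + b) = appOf A C T G a + appOf A C T G b := by
  letI := A.ring G; letI := C.ring G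
  unfold appOf
  rw [A.map_add, hadd GpP (GpMk G) _ _, C.map_add]

theorem appOf_smul
    (hsmul : ∀ (G H : Gp) (c : k) (α : A.obj (H.α × G.α)),
      haveI := A.ring (H.α × G.α); haveI := A.alg (H.α × G.α)
      haveI := C.ring (H.α × G.α); haveI := C.alg (H.α × G.α)
      T G H (c • α) = c • T G H α)
    (G : Type) [Group G] [Fintype G] (c : k) (a : A.obj G) :
    haveI := A.ring G; haveI := C.ring G; haveI := A.alg G; haveI := C.alg G
    appOf A C T G (c • a) = c • appOf A C T G a := by
  letI := A.ring G; letI := C.ring G; letI := A.alg G; letI := C.alg G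
  unfold appOf
  rw [A.map_smul, hsmul GpP (GpMk G) c _, C.map_smul]

theorem appOf_mul
    (hnat : ∀ (G H K L : Gp) (x : Biset (L.α × K.α) (H.α × G.α))
      (α : A.obj (H.α × G.α)), T K L (A.map x α) = C.map x (T G H α))
    (hcomp : ∀ (G H K : Gp) (α : A.obj (K.α × H.α)) (β : A.obj (H.α × G.α)),
      T G K (A.pcomp α β) = C.pcomp (T H K α) (T G H β))
    (G : Type) [Group G] [Fintype G] (a b : A.obj G) :
    haveI := A.ring G; haveI := C.ring G
    appOf A C T G (a * b) = appOf A C T G a * appOf A C T G b := by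
  letI := A.ring G; letI := C.ring G
  have htilde : T (GpMk G) (GpMk G) (A.tilde a) = C.tilde (appOf A C T G a) := by
    have h1 : A.tilde a
        = A.map (Biset.ind ((diagHom G).comp (piG G))) (A.map (Biset.ind (sigG G)) a) := by
      unfold GreenBF.tilde
      rw [map_ind_ind A]
      have hh : ((diagHom G).comp (piG G)).comp (sigG G) = diagHom G :=
        MonoidHom.ext fun _ => rfl
      rw [hh]
    rw [h1, hnat GpP (GpMk G) (GpMk G) (GpMk G)
        (Biset.ind ((diagHom G).comp (piG G))) _,
      ← appOf_hat A C T G a, map_ind_ind C]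
    have hh : ((diagHom G).comp (piG G)).comp (sigG G) = diagHom G :=
      MonoidHom.ext fun _ => rfl
    rw [hh]
    rfl
  unfold appOf
  rw [← appOf_hat A C T G a, ← appOf_hat A C T G b,
    map_cancel C (piG G) (sigG G) (MonoidHom.ext fun _ => rfl) (appOf A C T G a),
    map_cancel C (piG G) (sigG G) (MonoidHom.ext fun _ => rfl) (appOf A C T G b)]
  rw [hat_mul A G a b,
    hcomp GpP (GpMk G) (GpMk G) (A.tilde a) (A.map (Biset.ind (sigG G)) b),
    htilde, ← appOf_hat A C T G b,
    ← hat_mul C G (appOf A C T G a) (appOf A C T G b)]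
  exact map_cancel C (piG G) (sigG G) (MonoidHom.ext fun _ => rfl) _

theorem appOf_one
    (hnat : ∀ (G H K L : Gp) (x : Biset (L.α × K.α) (H.α × G.α))
      (α : A.obj (H.α × G.α)), T K L (A.map x α) = C.map x (T G H α))
    (hid : ∀ G : Gp, T G G (A.catId G.α) = C.catId G.α)
    (G : Type) [Group G] [Fintype G] :
    haveI := A.ring G; haveI := C.ring G
    appOf A C T G (1 : A.obj G) = 1 := by
  letI := A.ring G; letI := C.ring G
  letI := A.ring PUnit; letI := C.ring PUnit
  have h2 : T GpP GpP (A.map (Biset.ind (sigG PUnit)) A.one1)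
      = C.map (Biset.ind (sigG PUnit)) C.one1 := by
    rw [hat_one A, hat_one C]
    exact hid GpP
  have hP : appOf A C T PUnit A.one1 = C.one1 := by
    show C.map (Biset.ind (piG PUnit))
        (T GpP GpP (A.map (Biset.ind (sigG PUnit)) A.one1)) = C.one1
    rw [h2]
    exact map_cancel (G := PUnit × PUnit) (H := PUnit) C (piG PUnit) (sigG PUnit)
      (MonoidHom.ext fun _ => rfl) C.one1
  have h3 : (1 : A.obj G) = A.map (Biset.res (1 : G →* PUnit)) A.one1 :=
    (A.res_one (1 : G →* PUnit)).symm
  rw [h3, appOf_natural A C T hnat _ _, hP]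
  exact C.res_one (1 : G →* PUnit)

theorem appOf_spec
    (hnat : ∀ (G H K L : Gp) (x : Biset (L.α × K.α) (H.α × G.α))
      (α : A.obj (H.α × G.α)), T K L (A.map x α) = C.map x (T G H α))
    (G H : Gp) (α : A.obj (H.α × G.α)) :
    appOf A C T (H.α × G.α) α = T G H α := by
  unfold appOf
  rw [hnat G H GpP (GpMk (H.α × G.α)) (Biset.ind (sigG (H.α × G.α))) α]
  exact map_cancel (G := (H.α × G.α) × PUnit) (H := H.α × G.α) C
    (piG (H.α × G.α)) (sigG (H.α × G.α)) (MonoidHom.ext fun _ => rfl) _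

/-- The morphism of Green biset functors induced by the data of the functor. -/
def homOf
    (hnat : ∀ (G H K L : Gp) (x : Biset (L.α × K.α) (H.α × G.α))
      (α : A.obj (H.α × G.α)), T K L (A.map x α) = C.map x (T G H α))
    (hid : ∀ G : Gp, T G G (A.catId G.α) = C.catId G.α)
    (hcomp : ∀ (G H K : Gp) (α : A.obj (K.α × H.α)) (β : A.obj (H.α × G.α)),
      T G K (A.pcomp α β) = C.pcomp (T H K α) (T G H β))
    (hadd : ∀ (G H : Gp) (α β : A.obj (H.α × G.α)),
      haveI := A.ring (H.α × G.α); haveI := C.ring (H.α × G.α)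
      T G H (α + β) = T G H α + T G H β)
    (hsmul : ∀ (G H : Gp) (c : k) (α : A.obj (H.α × G.α)),
      haveI := A.ring (H.α × G.α); haveI := A.alg (H.α × G.α)
      haveI := C.ring (H.α × G.α); haveI := C.alg (H.α × G.α)
      T G H (c • α) = c • T G H α) :
    GreenHom A C where
  app G _ _ a := appOf A C T G a
  natural X a := appOf_natural A C T hnat X a
  app_add G _ _ a b := appOf_add A C T hadd G a b
  app_smul G _ _ c a := appOf_smul A C T hsmul G c a
  app_mul G _ _ a b := appOf_mul A C T hnat hcomp G a b
  app_one G _ _ := appOf_one A C T hnat hid G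

end Construct

theorem linFunctor_eq {k : Type} [CommRing k] {A C : GreenBF k}
    (F G : LinFunctor k A C) (h1 : F.onObj = G.onObj)
    (h2 : HEq F.onHom G.onHom) : F = G := by
  cases F; cases G
  dsimp only at h1 h2
  subst h1
  have h3 := eq_of_heq h2
  subst h3
  rfl

end Aux

/-! STATEMENT 5: a `k`-linear functor `F : P_A → P_C` is induced by a morphism of
Green biset functors iff `F` is the identity on objects and commutes with all
biset operations `A(x)`, `x ∈ B_k(L×K, H×G)`. -/
theorem statement5 (k : Type) [CommRing k] (A C : GreenBF k)
    (F : LinFunctor k A C) :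
    (∃ f : GreenHom A C, F = inducedFunctor k A C f) ↔
      ∃ h : F.onObj = id,
        ∀ (G H K L : Gp) (x : Biset (L.α × K.α) (H.α × G.α))
          (α : A.obj (H.α × G.α)),
          cast (show C.obj ((F.onObj L).α × (F.onObj K).α) = C.obj (L.α × K.α) by
              rw [h]; rfl)
            (F.onHom K L (A.map x α)) =
          C.map x
            (cast (show C.obj ((F.onObj H).α × (F.onObj G).α) = C.obj (H.α × G.α) by
                rw [h]; rfl)
              (F.onHom G H α)) := by
  constructor
  · rintro ⟨f, rfl⟩
    refine ⟨rfl, ?_⟩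
    intro G H K L x α
    exact f.natural x α
  · rintro ⟨h, hyp⟩
    obtain ⟨onObj, T, hid, hcomp, hadd, hsmul⟩ := F
    have h' : onObj = id := h
    subst h'
    have hnat : ∀ (G H K L : Gp) (x : Biset (L.α × K.α) (H.α × G.α))
        (α : A.obj (H.α × G.α)), T K L (A.map x α) = C.map x (T G H α) :=
      fun G H K L x α => hyp G H K L x α
    refine ⟨homOf A C T hnat hid hcomp hadd hsmul, ?_⟩
    have hT : T = fun (G H : Gp) (α : A.obj (H.α × G.α)) =>
        (homOf A C T hnat hid hcomp hadd hsmul).app (H.α × G.α) α := by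
      funext G H α
      exact (appOf_spec A C T hnat G H α).symm
    exact linFunctor_eq _ _ rfl (heq_of_eq hT)
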